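/- Let n ≥ 1 and let p(·) ∈ C^log(ℝⁿ) be a variable exponent with 0 < p₋ ≤ p₊ < ∞. Then there exists a positive constant C such that for all cubes Q₁, Q₂ of ℝⁿ with Q₁ ⊂ Q₂, one has C^{−1} (|Q₁|/|Q₂|)^{1/p₋} ≤ ‖χ_{Q₁}‖_{L^{p(·)}(ℝⁿ)} / ‖χ_{Q₂}‖_{L^{p(·)}(ℝⁿ)} ≤ C (|Q₁|/|Q₂|)^{1/p₊}. -/

import Mathlib

open MeasureTheory ENNReal Metric

noncomputable section

/-- The Luxemburg quasi-norm of the variable exponent Lebesgue space `L^{p(·)}(ℝⁿ)`,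
applied to an `ℝ≥0∞`-valued function. -/
def vnorm {n : ℕ} (p : EuclideanSpace ℝ (Fin n) → ℝ) (f : EuclideanSpace ℝ (Fin n) → ℝ≥0∞) : ℝ≥0∞ :=
  sInf {lam : ℝ≥0∞ | 0 < lam ∧ lam ≠ ⊤ ∧ ∫⁻ x, (f x / lam) ^ (p x) ∂volume ≤ 1}

/-- The globally log-Hölder continuity condition `p(·) ∈ C^log(ℝⁿ)`. -/
def LogHolder {n : ℕ} (p : EuclideanSpace ℝ (Fin n) → ℝ) : Prop :=
  (∃ C : ℝ, 0 < C ∧ ∀ x y : EuclideanSpace ℝ (Fin n),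
    |p x - p y| ≤ C / Real.log (Real.exp 1 + 1 / dist x y)) ∧
  (∃ C : ℝ, 0 < C ∧ ∃ pinf : ℝ, ∀ x : EuclideanSpace ℝ (Fin n),
    |p x - pinf| ≤ C / Real.log (Real.exp 1 + ‖x‖))

/-- The cube centered at `c` with side length `l`, sides parallel to the axes. -/
def cube {n : ℕ} (c : EuclideanSpace ℝ (Fin n)) (l : ℝ) : Set (EuclideanSpace ℝ (Fin n)) :=
  {y | ∀ i, |y i - c i| ≤ l / 2}

namespace S16

variable {n : ℕ}

/-- antitone of rpow in the base for nonpositive exponents -/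
lemma rpow_anti {a b c : ℝ} (ha : 0 < a) (hab : a ≤ b) (hc : c ≤ 0) : b ^ c ≤ a ^ c := by
  have hb : 0 < b := lt_of_lt_of_le ha hab
  rw [show c = -(-c) by ring, Real.rpow_neg ha.le, Real.rpow_neg hb.le]
  have h1 : a ^ (-c) ≤ b ^ (-c) := Real.rpow_le_rpow ha.le hab (by linarith)
  have h2 : (0:ℝ) < a ^ (-c) := Real.rpow_pos_of_pos ha _
  exact inv_anti₀ h2 h1

lemma rpow_anti_strict {a b c : ℝ} (ha : 0 < a) (hab : a < b) (hc : c < 0) : b ^ c < a ^ c := by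
  have hb : 0 < b := lt_trans ha hab
  rw [show c = -(-c) by ring, Real.rpow_neg ha.le, Real.rpow_neg hb.le]
  have h1 : a ^ (-c) < b ^ (-c) := Real.rpow_lt_rpow ha.le hab (by linarith)
  have h2 : (0:ℝ) < a ^ (-c) := Real.rpow_pos_of_pos ha _
  exact inv_strictAnti₀ h2 h1

lemma exp_rpow' (a b : ℝ) : (Real.exp a) ^ b = Real.exp (a * b) := by
  rw [Real.rpow_def_of_pos (Real.exp_pos a), Real.log_exp]

lemma measurableSet_cube (c : EuclideanSpace ℝ (Fin n)) (l : ℝ) : MeasurableSet (cube c l) := by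
  have : cube c l = ⋂ i, {y : EuclideanSpace ℝ (Fin n) | |y i - c i| ≤ l / 2} := by
    ext y; simp [cube, Set.mem_iInter]
  rw [this]
  refine MeasurableSet.iInter fun i => ?_
  have hm : Measurable fun y : EuclideanSpace ℝ (Fin n) => |y i - c i| := by
    have : Continuous fun y : EuclideanSpace ℝ (Fin n) => |y i - c i| := by
      exact ((EuclideanSpace.proj (𝕜 := ℝ) i).continuous.sub continuous_const).abs
    exact this.measurable
  exact measurableSet_le hm measurable_const

lemma volume_cube (c : EuclideanSpace ℝ (Fin n)) {l : ℝ} (hl : 0 ≤ l) :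
    volume (cube c l) = ENNReal.ofReal (l ^ n) := by
  have h := EuclideanSpace.volume_preserving_symm_measurableEquiv_toLp (Fin n)
  have hs : MeasurableSet (Set.univ.pi fun i : Fin n => Set.Icc (c i - l/2) (c i + l/2)) :=
    MeasurableSet.univ_pi fun i => measurableSet_Icc
  have hpre : cube c l = (MeasurableEquiv.toLp 2 (Fin n → ℝ)).symm ⁻¹'
      (Set.univ.pi fun i => Set.Icc (c i - l/2) (c i + l/2)) := by
    ext y
    simp only [cube, Set.mem_preimage, Set.mem_pi, Set.mem_univ, forall_true_left,
      Set.mem_Icc, Set.mem_setOf_eq, MeasurableEquiv.toLp_symm_apply]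
    constructor
    · intro hy i
      have := abs_le.1 (hy i); constructor <;> linarith [this.1, this.2]
    · intro hy i
      rw [abs_le]; have := hy i; constructor <;> linarith [this.1, this.2]
  rw [hpre, h.measure_preimage hs.nullMeasurableSet]
  rw [volume_pi_pi]
  have : ∀ i : Fin n, volume (Set.Icc (c i - l/2) (c i + l/2)) = ENNReal.ofReal l := by
    intro i; rw [Real.volume_Icc]; ring_nf
  simp only [this, Finset.prod_const, Finset.card_univ, Fintype.card_fin]
  rw [← ENNReal.ofReal_pow hl]

lemma abs_coord_le_norm (y : EuclideanSpace ℝ (Fin n)) (i : Fin n) : |y i| ≤ ‖y‖ := by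
  rw [EuclideanSpace.norm_eq]
  have h1 : |y i| = Real.sqrt (‖y i‖ ^ 2) := by
    rw [Real.sqrt_sq_eq_abs]; simp
  rw [h1]
  apply Real.sqrt_le_sqrt
  have : ‖y i‖ ^ 2 = ∑ j ∈ ({i} : Finset (Fin n)), ‖y j‖ ^ 2 := by simp
  rw [this]
  exact Finset.sum_le_sum_of_subset_of_nonneg (Finset.subset_univ _)
    (fun j _ _ => sq_nonneg _)

lemma dist_le_of_mem_cube {c : EuclideanSpace ℝ (Fin n)} {l : ℝ} (hl : 0 ≤ l)
    {x y : EuclideanSpace ℝ (Fin n)} (hx : x ∈ cube c l) (hy : y ∈ cube c l) :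
    dist x y ≤ l * Real.sqrt n := by
  rw [EuclideanSpace.dist_eq]
  have key : ∀ i, dist (x i) (y i) ^ 2 ≤ l ^ 2 := by
    intro i
    have h1 : |x i - y i| ≤ l := by
      have e : x i - y i = (x i - c i) - (y i - c i) := by ring
      calc |x i - y i| ≤ |x i - c i| + |y i - c i| := by rw [e]; exact abs_sub _ _
        _ ≤ l / 2 + l / 2 := add_le_add (hx i) (hy i)
        _ = l := by ring
    have : dist (x i) (y i) = |x i - y i| := Real.dist_eq _ _
    rw [this, sq_abs]
    calc (x i - y i) ^ 2 = |x i - y i| ^ 2 := (sq_abs _).symm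
      _ ≤ l ^ 2 := by
          have h0 : (0:ℝ) ≤ |x i - y i| := abs_nonneg _
          nlinarith
  have hsum : ∑ i, dist (x i) (y i) ^ 2 ≤ (n : ℝ) * l ^ 2 := by
    calc ∑ i, dist (x i) (y i) ^ 2 ≤ ∑ _i : Fin n, l ^ 2 := Finset.sum_le_sum fun i _ => key i
      _ = (n : ℝ) * l ^ 2 := by simp [Finset.sum_const, Finset.card_univ]
  calc Real.sqrt (∑ i, dist (x i) (y i) ^ 2) ≤ Real.sqrt ((n : ℝ) * l ^ 2) :=
        Real.sqrt_le_sqrt hsum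
    _ = l * Real.sqrt n := by
        rw [Real.sqrt_mul (Nat.cast_nonneg n), Real.sqrt_sq hl]; ring


lemma continuous_of_logHolder {p : EuclideanSpace ℝ (Fin n) → ℝ} {C₀ : ℝ} (hC₀ : 0 < C₀)
    (h : ∀ x y, |p x - p y| ≤ C₀ / Real.log (Real.exp 1 + 1 / dist x y)) : Continuous p := by
  rw [Metric.continuous_iff]
  intro x ε hε
  refine ⟨Real.exp (-(C₀ / ε + 1)), Real.exp_pos _, fun y hy => ?_⟩
  rcases eq_or_ne y x with rfl | hne
  · simpa using hε
  have hd : 0 < dist y x := dist_pos.2 hne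
  have h1 : Real.exp (C₀ / ε + 1) < 1 / dist y x := by
    rw [lt_div_iff₀ hd]
    calc Real.exp (C₀/ε+1) * dist y x < Real.exp (C₀/ε+1) * Real.exp (-(C₀/ε+1)) := by
          exact mul_lt_mul_of_pos_left hy (Real.exp_pos _)
      _ = 1 := by rw [← Real.exp_add, show C₀/ε+1 + -(C₀/ε+1) = 0 by ring, Real.exp_zero]
  have h2 : C₀ / ε + 1 < Real.log (Real.exp 1 + 1 / dist y x) := by
    calc C₀ / ε + 1 = Real.log (Real.exp (C₀ / ε + 1)) := (Real.log_exp _).symm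
      _ < Real.log (Real.exp 1 + 1 / dist y x) := by
          apply Real.log_lt_log (Real.exp_pos _)
          have : 0 < Real.exp 1 := Real.exp_pos 1
          linarith
  have hL0 : 0 < Real.log (Real.exp 1 + 1 / dist y x) := by
    have : 0 < C₀ / ε := div_pos hC₀ hε
    linarith
  have hLgt : C₀ / ε < Real.log (Real.exp 1 + 1 / dist y x) := by linarith
  have hfin : C₀ / Real.log (Real.exp 1 + 1 / dist y x) < ε := by
    rw [div_lt_iff₀ hL0]
    have := (div_lt_iff₀ hε).1 hLgt
    linarith
  calc dist (p y) (p x) = |p y - p x| := Real.dist_eq _ _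
    _ ≤ C₀ / Real.log (Real.exp 1 + 1 / dist y x) := h y x
    _ < ε := hfin

lemma ge_of_ae_le_continuous {f : EuclideanSpace ℝ (Fin n) → ℝ} (hf : Continuous f) {a : ℝ}
    (h : ∀ᵐ x ∂(volume : Measure (EuclideanSpace ℝ (Fin n))), a ≤ f x)
    (x : EuclideanSpace ℝ (Fin n)) : a ≤ f x := by
  by_contra hlt
  push_neg at hlt
  have hU : IsOpen {y : EuclideanSpace ℝ (Fin n) | f y < a} := isOpen_lt hf continuous_const
  have hne : {y : EuclideanSpace ℝ (Fin n) | f y < a}.Nonempty := ⟨x, hlt⟩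
  have hpos := hU.measure_pos (volume : Measure (EuclideanSpace ℝ (Fin n))) hne
  have hzero : (volume : Measure (EuclideanSpace ℝ (Fin n))) {y | f y < a} = 0 := by
    rw [ae_iff] at h
    convert h using 2
    ext y; simp [not_le]
  rw [hzero] at hpos
  exact lt_irrefl _ hpos

lemma le_of_ae_ge_continuous {f : EuclideanSpace ℝ (Fin n) → ℝ} (hf : Continuous f) {a : ℝ}
    (h : ∀ᵐ x ∂(volume : Measure (EuclideanSpace ℝ (Fin n))), f x ≤ a)
    (x : EuclideanSpace ℝ (Fin n)) : f x ≤ a := by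
  have := ge_of_ae_le_continuous (hf.neg) (a := -a) (by filter_upwards [h] with y hy; show -a ≤ -f y; linarith) x
  simpa using this


/-- The modular of the indicator of `Q` at scale `r`. -/
def mdl (p : EuclideanSpace ℝ (Fin n) → ℝ) (Q : Set (EuclideanSpace ℝ (Fin n))) (r : ℝ) : ℝ≥0∞ :=
  ∫⁻ x in Q, ENNReal.ofReal (r ^ (-(p x)))

lemma measurable_integrand {p : EuclideanSpace ℝ (Fin n) → ℝ} (hp : Measurable p) (r : ℝ)
    (hr : 0 < r) : Measurable fun x => ENNReal.ofReal (r ^ (-(p x))) := by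
  have : (fun x => ENNReal.ofReal (r ^ (-(p x)))) =
      fun x => ENNReal.ofReal (Real.exp (Real.log r * (-(p x)))) := by
    funext x; rw [Real.rpow_def_of_pos hr]
  rw [this]
  exact (((hp.neg.const_mul (Real.log r)).exp).ennreal_ofReal)

lemma lintegral_indicator_rpow {p : EuclideanSpace ℝ (Fin n) → ℝ}
    (hppos : ∀ x, 0 < p x) {Q : Set (EuclideanSpace ℝ (Fin n))} (hQ : MeasurableSet Q)
    {r : ℝ} (hr : 0 < r) :
    ∫⁻ x, ((Q.indicator (fun _ => (1:ℝ≥0∞)) x) / ENNReal.ofReal r) ^ (p x) ∂volume =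
      mdl p Q r := by
  have hfun : ∀ x, ((Q.indicator (fun _ => (1:ℝ≥0∞)) x) / ENNReal.ofReal r) ^ (p x) =
      Q.indicator (fun x => ENNReal.ofReal (r ^ (-(p x)))) x := by
    intro x
    by_cases hx : x ∈ Q
    · rw [Set.indicator_of_mem hx, Set.indicator_of_mem hx, one_div,
        ← ENNReal.ofReal_inv_of_pos hr, ENNReal.ofReal_rpow_of_pos (inv_pos.2 hr),
        Real.rpow_neg hr.le, Real.inv_rpow hr.le]
    · rw [Set.indicator_of_notMem hx, Set.indicator_of_notMem hx, ENNReal.zero_div,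
        ENNReal.zero_rpow_of_pos (hppos x)]
  simp_rw [hfun]
  rw [lintegral_indicator hQ]
  rfl

lemma mdl_le_const {p : EuclideanSpace ℝ (Fin n) → ℝ} {Q : Set (EuclideanSpace ℝ (Fin n))}
    {r B : ℝ} (hB : ∀ y ∈ Q, r ^ (-(p y)) ≤ B) :
    mdl p Q r ≤ ENNReal.ofReal B * volume Q := by
  calc mdl p Q r ≤ ∫⁻ _x in Q, ENNReal.ofReal B ∂volume :=
        setLIntegral_mono measurable_const fun x hx => ENNReal.ofReal_le_ofReal (hB x hx)
    _ = ENNReal.ofReal B * volume Q := setLIntegral_const _ _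

lemma const_le_mdl {p : EuclideanSpace ℝ (Fin n) → ℝ} (hp : Measurable p)
    {Q S : Set (EuclideanSpace ℝ (Fin n))} (hS : S ⊆ Q)
    {r B : ℝ} (hr : 0 < r) (hB : ∀ y ∈ S, B ≤ r ^ (-(p y))) :
    ENNReal.ofReal B * volume S ≤ mdl p Q r := by
  calc ENNReal.ofReal B * volume S = ∫⁻ _x in S, ENNReal.ofReal B ∂volume :=
        (setLIntegral_const _ _).symm
    _ ≤ ∫⁻ x in S, ENNReal.ofReal (r ^ (-(p x))) ∂volume :=
        setLIntegral_mono (measurable_integrand hp r hr) fun x hx =>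
          ENNReal.ofReal_le_ofReal (hB x hx)
    _ ≤ mdl p Q r := lintegral_mono_set hS

/-- membership in the vnorm defining set -/
lemma vnorm_le {p : EuclideanSpace ℝ (Fin n) → ℝ}
    (hppos : ∀ x, 0 < p x) {Q : Set (EuclideanSpace ℝ (Fin n))} (hQ : MeasurableSet Q)
    {r : ℝ} (hr : 0 < r) (hmod : mdl p Q r ≤ 1) :
    vnorm p (Q.indicator fun _ => (1:ℝ≥0∞)) ≤ ENNReal.ofReal r := by
  apply sInf_le
  refine ⟨ENNReal.ofReal_pos.2 hr, ENNReal.ofReal_ne_top, ?_⟩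
  rw [lintegral_indicator_rpow hppos hQ hr]
  exact hmod

lemma le_vnorm {p : EuclideanSpace ℝ (Fin n) → ℝ}
    (hppos : ∀ x, 0 < p x) {Q : Set (EuclideanSpace ℝ (Fin n))} (hQ : MeasurableSet Q)
    {b : ℝ}
    (h : ∀ r : ℝ, 0 < r → mdl p Q r ≤ 1 → b ≤ r) :
    ENNReal.ofReal b ≤ vnorm p (Q.indicator fun _ => (1:ℝ≥0∞)) := by
  apply le_sInf
  rintro lam ⟨hlam0, hlamtop, hlamint⟩
  have hr : 0 < lam.toReal := ENNReal.toReal_pos hlam0.ne' hlamtop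
  have hlam : lam = ENNReal.ofReal lam.toReal := (ENNReal.ofReal_toReal hlamtop).symm
  rw [hlam] at hlamint ⊢
  rw [lintegral_indicator_rpow hppos hQ hr] at hlamint
  exact ENNReal.ofReal_le_ofReal (h _ hr hlamint)


lemma one_le_logE {t : ℝ} (ht : 0 ≤ t) : 1 ≤ Real.log (Real.exp 1 + t) := by
  calc (1:ℝ) = Real.log (Real.exp 1) := (Real.log_exp 1).symm
    _ ≤ _ := Real.log_le_log (Real.exp_pos 1) (by linarith)

lemma one_le_sqrt_n (hn : 1 ≤ n) : 1 ≤ Real.sqrt n := by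
  have : Real.sqrt 1 ≤ Real.sqrt n := Real.sqrt_le_sqrt (by exact_mod_cast hn)
  simpa using this

/-- R1 : log (1/l) ≤ M * L l  for 0 < l ≤ 1 -/
lemma log_ratio_bound (hn : 1 ≤ n) {l : ℝ} (hl0 : 0 < l) (hl1 : l ≤ 1) :
    Real.log (1/l) ≤ (Real.log (Real.sqrt n) + 1) *
      Real.log (Real.exp 1 + 1/(l * Real.sqrt n)) := by
  set s := Real.sqrt n with hs_def
  have hs1 : 1 ≤ s := one_le_sqrt_n hn
  have hs0 : 0 < s := lt_of_lt_of_le one_pos hs1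
  have hls0 : 0 < l * s := mul_pos hl0 hs0
  set L := Real.log (Real.exp 1 + 1/(l * s)) with hL_def
  have hL1 : 1 ≤ L := one_le_logE (by positivity)
  have hlogs : 0 ≤ Real.log s := Real.log_nonneg hs1
  have hsplit : Real.log (1/l) = Real.log s + Real.log (1/(l*s)) := by
    rw [← Real.log_mul hs0.ne' (by positivity)]
    congr 1
    field_simp
  have h2 : Real.log (1/(l*s)) ≤ L := by
    apply Real.log_le_log (by positivity)
    have := Real.exp_pos 1
    linarith
  have h3 : Real.log s ≤ Real.log s * L := le_mul_of_one_le_right hlogs hL1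
  rw [hsplit]
  nlinarith

/-- R2 : d(l) * log (1/r) ≤ A for admissible r -/
lemma dlog_bound (hn : 1 ≤ n) {C₀ pm : ℝ} (hC₀ : 0 < C₀) (hpm : 0 < pm)
    {l r : ℝ} (hl0 : 0 < l) (hl1 : l ≤ 1) (hr0 : 0 < r)
    (hrmin : (l^n)^(pm⁻¹) ≤ r) :
    (C₀ / Real.log (Real.exp 1 + 1/(l * Real.sqrt n))) * Real.log (1/r) ≤
      C₀ * ((Real.log (Real.sqrt n) + 1) * (n / pm)) := by
  have hs0 : 0 < Real.sqrt n := lt_of_lt_of_le one_pos (one_le_sqrt_n hn)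
  set L := Real.log (Real.exp 1 + 1/(l * Real.sqrt n)) with hL_def
  have hL1 : 1 ≤ L := one_le_logE (by positivity)
  have hL0 : 0 < L := lt_of_lt_of_le one_pos hL1
  have hln_pos : 0 < (l:ℝ)^n := pow_pos hl0 n
  have hlogr : Real.log (1/r) ≤ (n / pm) * Real.log (1/l) := by
    have h1 : Real.log ((l^n)^(pm⁻¹)) ≤ Real.log r :=
      Real.log_le_log (Real.rpow_pos_of_pos hln_pos _) hrmin
    rw [Real.log_rpow hln_pos, Real.log_pow] at h1
    rw [one_div, one_div, Real.log_inv, Real.log_inv]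
    have : (n:ℝ) / pm * (- Real.log l) = - (pm⁻¹ * ((n:ℝ) * Real.log l)) := by
      field_simp
    rw [this]
    linarith
  have hlog1l : 0 ≤ Real.log (1/l) := by
    rw [one_div, Real.log_inv]
    have := Real.log_nonpos hl0.le hl1
    linarith
  have hR1 : Real.log (1/l) ≤ (Real.log (Real.sqrt n) + 1) * L := log_ratio_bound hn hl0 hl1
  have hd0 : 0 ≤ C₀ / L := div_nonneg hC₀.le hL0.le
  have hnpm : (0:ℝ) ≤ (n:ℝ)/pm := div_nonneg (Nat.cast_nonneg n) hpm.le
  calc (C₀ / L) * Real.log (1/r) ≤ (C₀ / L) * ((n/pm) * ((Real.log (Real.sqrt n) + 1) * L)) := by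
        apply mul_le_mul_of_nonneg_left _ hd0
        calc Real.log (1/r) ≤ (n/pm) * Real.log (1/l) := hlogr
          _ ≤ (n/pm) * ((Real.log (Real.sqrt n) + 1) * L) :=
              mul_le_mul_of_nonneg_left hR1 hnpm
    _ = C₀ * ((Real.log (Real.sqrt n) + 1) * (n / pm)) := by
        field_simp

/-- oscillation of p over a cube -/
lemma osc_cube {p : EuclideanSpace ℝ (Fin n) → ℝ} {C₀ : ℝ} (hC₀ : 0 < C₀)
    (hloc : ∀ x y, |p x - p y| ≤ C₀ / Real.log (Real.exp 1 + 1 / dist x y))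
    (hn : 1 ≤ n) {c : EuclideanSpace ℝ (Fin n)} {l : ℝ} (hl0 : 0 < l)
    {x y : EuclideanSpace ℝ (Fin n)} (hx : x ∈ cube c l) (hy : y ∈ cube c l) :
    |p x - p y| ≤ C₀ / Real.log (Real.exp 1 + 1/(l * Real.sqrt n)) := by
  have hs0 : 0 < Real.sqrt n := lt_of_lt_of_le one_pos (one_le_sqrt_n hn)
  have hD0 : 0 < l * Real.sqrt n := mul_pos hl0 hs0
  set L := Real.log (Real.exp 1 + 1/(l * Real.sqrt n)) with hL_def
  have hL1 : 1 ≤ L := one_le_logE (by positivity)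
  have hL0 : 0 < L := lt_of_lt_of_le one_pos hL1
  rcases eq_or_ne x y with rfl | hne
  · simp only [sub_self, abs_zero]
    positivity
  · have hd0 : 0 < dist x y := dist_pos.2 hne
    have hdist : dist x y ≤ l * Real.sqrt n := dist_le_of_mem_cube hl0.le hx hy
    have hmono : L ≤ Real.log (Real.exp 1 + 1/dist x y) := by
      apply Real.log_le_log (by positivity)
      have : 1/(l * Real.sqrt n) ≤ 1/(dist x y) := one_div_le_one_div_of_le hd0 hdist
      linarith
    calc |p x - p y| ≤ C₀ / Real.log (Real.exp 1 + 1 / dist x y) := hloc x y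
      _ ≤ C₀ / L := div_le_div_of_nonneg_left hC₀.le hL0 hmono
    

section Small

variable {p : EuclideanSpace ℝ (Fin n) → ℝ} {C₀ pm pp : ℝ}

/-- The constant for the small cube estimates. -/
def KsC (n : ℕ) (C₀ pm : ℝ) : ℝ :=
  Real.exp ((C₀ * ((Real.log (Real.sqrt n) + 1) * (n / pm)) + 1)/pm)

lemma A_nonneg (hC₀ : 0 < C₀) (hpm : 0 < pm) (hn : 1 ≤ n) :
    0 ≤ C₀ * ((Real.log (Real.sqrt n) + 1) * (n / pm)) := by
  have h1 : 0 ≤ Real.log (Real.sqrt n) := Real.log_nonneg (one_le_sqrt_n hn)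
  positivity

lemma one_le_KsC (hC₀ : 0 < C₀) (hpm : 0 < pm) (hn : 1 ≤ n) : 1 ≤ KsC n C₀ pm :=
  Real.one_le_exp (div_nonneg (by linarith [A_nonneg hC₀ hpm hn]) hpm.le)

lemma small_upper (hn : 1 ≤ n) (hp : Measurable p)
    (hC₀ : 0 < C₀) (hloc : ∀ x y, |p x - p y| ≤ C₀ / Real.log (Real.exp 1 + 1 / dist x y))
    (hpm_pos : 0 < pm) (hlow : ∀ x, pm ≤ p x)
    {c x₀ : EuclideanSpace ℝ (Fin n)} {l : ℝ} (hl0 : 0 < l) (hl1 : l ≤ 1)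
    (hx₀ : x₀ ∈ cube c l) :
    vnorm p ((cube c l).indicator fun _ => (1:ℝ≥0∞)) ≤
      ENNReal.ofReal (KsC n C₀ pm * (l^n)^((p x₀)⁻¹)) := by
  set A := C₀ * ((Real.log (Real.sqrt n) + 1) * (n / pm)) with hA_def
  have hA0 : 0 ≤ A := A_nonneg hC₀ hpm_pos hn
  set Ks := KsC n C₀ pm with hKs_def
  have hKs1 : 1 ≤ Ks := one_le_KsC hC₀ hpm_pos hn
  have hKs0 : 0 < Ks := lt_of_lt_of_le one_pos hKs1
  have hppos : ∀ x, 0 < p x := fun x => lt_of_lt_of_le hpm_pos (hlow x)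
  have hQ := measurableSet_cube c l
  have hln0 : 0 < l^n := pow_pos hl0 n
  have hln1 : l^n ≤ 1 := pow_le_one₀ hl0.le hl1
  set q := p x₀ with hq_def
  have hq : pm ≤ q := hlow x₀
  have hq0 : 0 < q := hppos x₀
  set lst := (l^n)^(q⁻¹) with hlst_def
  have hlst0 : 0 < lst := Real.rpow_pos_of_pos hln0 _
  have hlst1 : lst ≤ 1 := Real.rpow_le_one hln0.le hln1 (inv_nonneg.2 hq0.le)
  have hvolQ : volume (cube c l) = ENNReal.ofReal (l^n) := volume_cube c hl0.le
  by_cases hbig : 1 ≤ Ks * lst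
  · -- vnorm ≤ 1 ≤ Ks * lst
    have h1 : vnorm p ((cube c l).indicator fun _ => (1:ℝ≥0∞)) ≤ ENNReal.ofReal 1 := by
      apply vnorm_le hppos hQ one_pos
      have : mdl p (cube c l) 1 ≤ ENNReal.ofReal 1 * volume (cube c l) :=
        mdl_le_const fun y _ => by rw [Real.one_rpow]
      calc mdl p (cube c l) 1 ≤ ENNReal.ofReal 1 * volume (cube c l) := this
        _ = ENNReal.ofReal (l^n) := by rw [ENNReal.ofReal_one, one_mul, hvolQ]
        _ ≤ 1 := ENNReal.ofReal_le_one.2 hln1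
    exact h1.trans (ENNReal.ofReal_le_ofReal hbig)
  · push_neg at hbig
    set r := Ks * lst with hr_def
    have hr0 : 0 < r := mul_pos hKs0 hlst0
    have hr1 : r < 1 := hbig
    set d := C₀ / Real.log (Real.exp 1 + 1/(l * Real.sqrt n)) with hd_def
    have hL1 : 1 ≤ Real.log (Real.exp 1 + 1/(l * Real.sqrt n)) := by
      apply one_le_logE
      have hs0 : 0 < Real.sqrt n := lt_of_lt_of_le one_pos (one_le_sqrt_n hn)
      positivity
    have hd0 : 0 ≤ d := div_nonneg hC₀.le (by linarith)
    apply vnorm_le hppos hQ hr0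
    -- pointwise bound
    have hpt : ∀ y ∈ cube c l, r ^ (-(p y)) ≤ r ^ (-(q + d)) := by
      intro y hy
      apply Real.rpow_le_rpow_of_exponent_ge hr0 hr1.le
      have := osc_cube hC₀ hloc hn hl0 hy hx₀
      have h2 : p y - q ≤ d := le_trans (le_abs_self _) this
      linarith
    have hmdl : mdl p (cube c l) r ≤ ENNReal.ofReal (r ^ (-(q+d)) * l^n) := by
      calc mdl p (cube c l) r ≤ ENNReal.ofReal (r ^ (-(q+d))) * volume (cube c l) :=
            mdl_le_const hpt
        _ = ENNReal.ofReal (r ^ (-(q+d)) * l^n) := by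
            rw [hvolQ, ← ENNReal.ofReal_mul (Real.rpow_nonneg hr0.le _)]
    -- key real estimate
    have hrmin : (l^n)^(pm⁻¹) ≤ r := by
      have h1 : (l^n)^(pm⁻¹) ≤ lst := by
        apply Real.rpow_le_rpow_of_exponent_ge hln0 hln1
        exact inv_anti₀ hpm_pos hq
      calc (l^n)^(pm⁻¹) ≤ lst := h1
        _ ≤ Ks * lst := le_mul_of_one_le_left hlst0.le hKs1
    have hkey : r ^ (-(q+d)) * l^n ≤ Real.exp (-1) := by
      have e1 : r ^ (-(q+d)) = r^(-q) * r^(-d) := by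
        rw [show -(q+d) = -q + -d by ring, Real.rpow_add hr0]
      have e2 : r^(-q) = Ks^(-q) * lst^(-q) := Real.mul_rpow hKs0.le hlst0.le
      have e3 : lst^(-q) = (l^n)⁻¹ := by
        rw [hlst_def, ← Real.rpow_mul hln0.le]
        rw [show q⁻¹ * -q = -1 by field_simp]
        exact Real.rpow_neg_one _
      have e4 : r ^ (-(q+d)) * l^n = Ks^(-q) * r^(-d) := by
        rw [e1, e2, e3]
        field_simp
      rw [e4]
      have h5 : Ks^(-q) ≤ Real.exp (-(A+1)) := by
        calc Ks^(-q) ≤ Ks^(-pm) := Real.rpow_le_rpow_of_exponent_le hKs1 (by linarith)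
          _ = Real.exp (-(A+1)) := by
              rw [hKs_def, KsC, exp_rpow', ← hA_def]
              congr 1
              field_simp
      have h6 : r^(-d) ≤ Real.exp A := by
        have e5 : r^(-d) = Real.exp (d * Real.log (1/r)) := by
          rw [Real.rpow_def_of_pos hr0, one_div, Real.log_inv]
          congr 1
          ring
        rw [e5]
        exact Real.exp_le_exp.2 (dlog_bound hn hC₀ hpm_pos hl0 hl1 hr0 hrmin)
      calc Ks^(-q) * r^(-d) ≤ Real.exp (-(A+1)) * Real.exp A := by
            apply mul_le_mul h5 h6 (Real.rpow_nonneg hr0.le _) (Real.exp_pos _).le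
        _ = Real.exp (-1) := by rw [← Real.exp_add]; congr 1; ring
    calc mdl p (cube c l) r ≤ ENNReal.ofReal (r ^ (-(q+d)) * l^n) := hmdl
      _ ≤ ENNReal.ofReal (Real.exp (-1)) := ENNReal.ofReal_le_ofReal hkey
      _ ≤ 1 := by
          apply ENNReal.ofReal_le_one.2
          rw [show (1:ℝ) = Real.exp 0 by rw [Real.exp_zero]]
          exact Real.exp_le_exp.2 (by norm_num)


lemma small_lower (hn : 1 ≤ n) (hp : Measurable p)
    (hC₀ : 0 < C₀) (hloc : ∀ x y, |p x - p y| ≤ C₀ / Real.log (Real.exp 1 + 1 / dist x y))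
    (hpm_pos : 0 < pm) (hlow : ∀ x, pm ≤ p x)
    {c x₀ : EuclideanSpace ℝ (Fin n)} {l : ℝ} (hl0 : 0 < l) (hl1 : l ≤ 1)
    (hx₀ : x₀ ∈ cube c l) :
    ENNReal.ofReal ((l^n)^((p x₀)⁻¹) / KsC n C₀ pm) ≤
      vnorm p ((cube c l).indicator fun _ => (1:ℝ≥0∞)) := by
  set A := C₀ * ((Real.log (Real.sqrt n) + 1) * (n / pm)) with hA_def
  have hA0 : 0 ≤ A := A_nonneg hC₀ hpm_pos hn
  set Ks := KsC n C₀ pm with hKs_def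
  have hKs1 : 1 ≤ Ks := one_le_KsC hC₀ hpm_pos hn
  have hKs0 : 0 < Ks := lt_of_lt_of_le one_pos hKs1
  have hppos : ∀ x, 0 < p x := fun x => lt_of_lt_of_le hpm_pos (hlow x)
  have hQ := measurableSet_cube c l
  have hln0 : 0 < l^n := pow_pos hl0 n
  have hln1 : l^n ≤ 1 := pow_le_one₀ hl0.le hl1
  set q := p x₀ with hq_def
  have hq : pm ≤ q := hlow x₀
  have hq0 : 0 < q := hppos x₀
  set lst := (l^n)^(q⁻¹) with hlst_def
  have hlst0 : 0 < lst := Real.rpow_pos_of_pos hln0 _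
  have hlst1 : lst ≤ 1 := Real.rpow_le_one hln0.le hln1 (inv_nonneg.2 hq0.le)
  have hvolQ : volume (cube c l) = ENNReal.ofReal (l^n) := volume_cube c hl0.le
  set d := C₀ / Real.log (Real.exp 1 + 1/(l * Real.sqrt n)) with hd_def
  have hL1 : 1 ≤ Real.log (Real.exp 1 + 1/(l * Real.sqrt n)) := by
    apply one_le_logE
    have hs0 : 0 < Real.sqrt n := lt_of_lt_of_le one_pos (one_le_sqrt_n hn)
    positivity
  have hd0 : 0 ≤ d := div_nonneg hC₀.le (by linarith)
  apply le_vnorm hppos hQ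
  intro r hr0 hmod
  -- step 1 : (l^n)^(pm⁻¹) ≤ r
  have hstep1 : (l^n)^(pm⁻¹) ≤ r := by
    by_contra hcon
    push_neg at hcon
    set rmin := (l^n)^(pm⁻¹) with hrmin_def
    have hrmin0 : 0 < rmin := Real.rpow_pos_of_pos hln0 _
    have hrmin1 : rmin ≤ 1 := Real.rpow_le_one hln0.le hln1 (inv_nonneg.2 hpm_pos.le)
    have hr1 : r < 1 := lt_of_lt_of_le hcon hrmin1
    have hpt : ∀ y ∈ cube c l, r^(-pm) ≤ r^(-(p y)) := fun y _ =>
      Real.rpow_le_rpow_of_exponent_ge hr0 hr1.le (neg_le_neg (hlow y))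
    have hge : ENNReal.ofReal (r^(-pm)) * volume (cube c l) ≤ mdl p (cube c l) r :=
      const_le_mdl hp subset_rfl hr0 hpt
    have hle1 : r^(-pm) * l^n ≤ 1 := by
      rw [← ENNReal.ofReal_le_one, ENNReal.ofReal_mul (Real.rpow_nonneg hr0.le _)]
      calc ENNReal.ofReal (r^(-pm)) * ENNReal.ofReal (l^n)
          = ENNReal.ofReal (r^(-pm)) * volume (cube c l) := by rw [hvolQ]
        _ ≤ mdl p (cube c l) r := hge
        _ ≤ 1 := hmod
    have hgt1 : 1 < r^(-pm) * l^n := by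
      have h1 : rmin^(-pm) < r^(-pm) := rpow_anti_strict hr0 hcon (by linarith)
      have h2 : rmin^(-pm) = (l^n)⁻¹ := by
        rw [hrmin_def, ← Real.rpow_mul hln0.le,
          show pm⁻¹ * -pm = -1 by field_simp, Real.rpow_neg_one]
      calc (1:ℝ) = (l^n)⁻¹ * l^n := by field_simp
        _ = rmin^(-pm) * l^n := by rw [h2]
        _ < r^(-pm) * l^n := mul_lt_mul_of_pos_right h1 hln0
    linarith
  -- step 2 : lst / Ks ≤ r
  by_contra hcon2
  push_neg at hcon2
  have hlstKs1 : lst / Ks ≤ 1 := by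
    rw [div_le_one hKs0]; linarith
  have hr1 : r < 1 := lt_of_lt_of_le hcon2 hlstKs1
  have hpt : ∀ y ∈ cube c l, r^(-(q - d)) ≤ r^(-(p y)) := by
    intro y hy
    apply Real.rpow_le_rpow_of_exponent_ge hr0 hr1.le
    have := osc_cube hC₀ hloc hn hl0 hx₀ hy
    have h2 : q - p y ≤ d := le_trans (le_abs_self _) this
    linarith
  have hge : ENNReal.ofReal (r^(-(q-d))) * volume (cube c l) ≤ mdl p (cube c l) r :=
    const_le_mdl hp subset_rfl hr0 hpt
  have hle1 : r^(-(q-d)) * l^n ≤ 1 := by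
    rw [← ENNReal.ofReal_le_one, ENNReal.ofReal_mul (Real.rpow_nonneg hr0.le _)]
    calc ENNReal.ofReal (r^(-(q-d))) * ENNReal.ofReal (l^n)
        = ENNReal.ofReal (r^(-(q-d))) * volume (cube c l) := by rw [hvolQ]
      _ ≤ mdl p (cube c l) r := hge
      _ ≤ 1 := hmod
  have hgt1 : 1 < r^(-(q-d)) * l^n := by
    have e1 : r^(-(q-d)) = r^(-q) * r^d := by
      rw [show -(q-d) = -q + d by ring, Real.rpow_add hr0]
    have hXgt : (lst/Ks)^(-q) < r^(-q) := rpow_anti_strict hr0 hcon2 (by linarith)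
    have hX'eq : (lst/Ks)^(-q) = (l^n)⁻¹ * Ks^q := by
      rw [Real.div_rpow hlst0.le hKs0.le]
      have e3 : lst^(-q) = (l^n)⁻¹ := by
        rw [hlst_def, ← Real.rpow_mul hln0.le,
          show q⁻¹ * -q = -1 by field_simp, Real.rpow_neg_one]
      rw [e3, Real.rpow_neg hKs0.le]
      rw [div_eq_mul_inv, inv_inv]
    have hKsq : Real.exp (A + 1) ≤ Ks^q := by
      calc Real.exp (A+1) = Ks^pm := by
            rw [hKs_def, KsC, exp_rpow', ← hA_def, div_mul_cancel₀ _ hpm_pos.ne']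
        _ ≤ Ks^q := Real.rpow_le_rpow_of_exponent_le hKs1 hq
    have hX' : (l^n)⁻¹ * Real.exp (A+1) ≤ (lst/Ks)^(-q) := by
      rw [hX'eq]
      exact mul_le_mul_of_nonneg_left hKsq (by positivity)
    have hY : Real.exp (-A) ≤ r^d := by
      have e5 : r^d = Real.exp (-(d * Real.log (1/r))) := by
        rw [Real.rpow_def_of_pos hr0, one_div, Real.log_inv]
        congr 1
        ring
      rw [e5]
      apply Real.exp_le_exp.2
      have := dlog_bound hn hC₀ hpm_pos hl0 hl1 hr0 hstep1
      rw [← hd_def, ← hA_def] at this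
      linarith
    have hY0 : (0:ℝ) < Real.exp (-A) := Real.exp_pos _
    have hBX : (l^n)⁻¹ * Real.exp (A+1) < r^(-q) := lt_of_le_of_lt hX' hXgt
    have hX0 : (0:ℝ) < r^(-q) := Real.rpow_pos_of_pos hr0 _
    have hprod : ((l^n)⁻¹ * Real.exp (A+1)) * Real.exp (-A) < r^(-q) * r^d := by
      calc ((l^n)⁻¹ * Real.exp (A+1)) * Real.exp (-A) < r^(-q) * Real.exp (-A) :=
            mul_lt_mul_of_pos_right hBX hY0
        _ ≤ r^(-q) * r^d := mul_le_mul_of_nonneg_left hY hX0.le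
    have hEE : Real.exp (A+1) * Real.exp (-A) = Real.exp 1 := by
      rw [← Real.exp_add]; congr 1; ring
    have hval : ((l^n)⁻¹ * Real.exp (A+1)) * Real.exp (-A) * l^n = Real.exp 1 := by
      calc ((l^n)⁻¹ * Real.exp (A+1)) * Real.exp (-A) * l^n
          = (Real.exp (A+1) * Real.exp (-A)) * ((l^n)⁻¹ * l^n) := by ring
        _ = Real.exp 1 * 1 := by rw [hEE, inv_mul_cancel₀ hln0.ne']
        _ = Real.exp 1 := mul_one _
    have h1e : (1:ℝ) < Real.exp 1 := by
      have := Real.add_one_le_exp 1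
      linarith
    calc (1:ℝ) < Real.exp 1 := h1e
      _ = ((l^n)⁻¹ * Real.exp (A+1)) * Real.exp (-A) * l^n := hval.symm
      _ < r^(-q) * r^d * l^n := mul_lt_mul_of_pos_right hprod hln0
      _ = r^(-(q-d)) * l^n := by rw [e1]
  linarith

end Small


section Large

variable {p : EuclideanSpace ℝ (Fin n) → ℝ} {Ci pinf pm pp : ℝ}

/-- key factor bound in the far region -/
lemma far_factor {Ci s r t : ℝ} (hCi : 0 < Ci) (hs : 0 < s) (hr : 1 ≤ r)
    (ht : r^s ≤ t) :
    r ^ (Ci / Real.log (Real.exp 1 + t)) ≤ Real.exp (Ci/s) := by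
  have hr0 : (0:ℝ) < r := lt_of_lt_of_le one_pos hr
  have hlogr : 0 ≤ Real.log r := Real.log_nonneg hr
  have ht0 : 0 < t := lt_of_lt_of_le (Real.rpow_pos_of_pos hr0 s) ht
  have hL1 : 1 ≤ Real.log (Real.exp 1 + t) := one_le_logE ht0.le
  have hL0 : 0 < Real.log (Real.exp 1 + t) := lt_of_lt_of_le one_pos hL1
  have hLs : s * Real.log r ≤ Real.log (Real.exp 1 + t) := by
    calc s * Real.log r = Real.log (r^s) := (Real.log_rpow hr0 s).symm
      _ ≤ Real.log t := Real.log_le_log (Real.rpow_pos_of_pos hr0 s) ht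
      _ ≤ Real.log (Real.exp 1 + t) := Real.log_le_log ht0 (by linarith [Real.exp_pos 1])
  rw [Real.rpow_def_of_pos hr0]
  apply Real.exp_le_exp.2
  have e : Real.log r * (Ci / Real.log (Real.exp 1 + t)) =
      (Ci * Real.log r) / Real.log (Real.exp 1 + t) := by ring
  rw [e, div_le_div_iff₀ hL0 hs]
  nlinarith

/-- The constant for the large cube upper estimate. -/
def KlC (n : ℕ) (Ci pm : ℝ) : ℝ := Real.exp ((2/pm) * (1 + n + 2*n*Ci/pm))

lemma one_le_KlC (hCi : 0 < Ci) (hpm : 0 < pm) : 1 ≤ KlC n Ci pm := by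
  apply Real.one_le_exp
  have h1 : (0:ℝ) ≤ 2*n*Ci/pm := by positivity
  have h2 : (0:ℝ) ≤ (n:ℝ) := Nat.cast_nonneg n
  positivity

lemma log_two_le_one : Real.log 2 ≤ 1 := by
  have h2e : (2:ℝ) ≤ Real.exp 1 := by linarith [Real.add_one_le_exp 1]
  calc Real.log 2 ≤ Real.log (Real.exp 1) := Real.log_le_log two_pos h2e
    _ = 1 := Real.log_exp 1

lemma exp_neg_one_le_half : Real.exp (-1) ≤ 1/2 := by
  have h2e : (2:ℝ) ≤ Real.exp 1 := by linarith [Real.add_one_le_exp 1]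
  rw [Real.exp_neg, ← one_div]
  exact one_div_le_one_div_of_le two_pos h2e

lemma norm_ball_subset_cube {R : ℝ} (hR : 0 ≤ R) :
    Metric.closedBall (0 : EuclideanSpace ℝ (Fin n)) R ⊆ cube 0 (2*R) := by
  intro y hy
  rw [Metric.mem_closedBall, dist_zero_right] at hy
  intro i
  have h1 : |y i| ≤ ‖y‖ := abs_coord_le_norm y i
  have h2 : (0 : EuclideanSpace ℝ (Fin n)) i = 0 := rfl
  rw [h2, sub_zero]
  calc |y i| ≤ ‖y‖ := h1
    _ ≤ R := hy
    _ = 2*R/2 := by ring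

lemma large_upper (hn : 1 ≤ n) (hp : Measurable p)
    (hCi : 0 < Ci) (hinf : ∀ x, |p x - pinf| ≤ Ci / Real.log (Real.exp 1 + ‖x‖))
    (hpm_pos : 0 < pm) (hlow : ∀ x, pm ≤ p x) (hpinf_low : pm ≤ pinf)
    {c : EuclideanSpace ℝ (Fin n)} {l : ℝ} (hl1 : 1 ≤ l) :
    vnorm p ((cube c l).indicator fun _ => (1:ℝ≥0∞)) ≤
      ENNReal.ofReal (KlC n Ci pm * (l^n)^(pinf⁻¹)) := by
  have hl0 : 0 < l := lt_of_lt_of_le one_pos hl1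
  have hppos : ∀ x, 0 < p x := fun x => lt_of_lt_of_le hpm_pos (hlow x)
  have hQ := measurableSet_cube c l
  have hn0 : (0:ℝ) < n := by exact_mod_cast hn
  have hln0 : 0 < l^n := pow_pos hl0 n
  have hln1 : 1 ≤ l^n := one_le_pow₀ hl1
  have hq0 : 0 < pinf := lt_of_lt_of_le hpm_pos hpinf_low
  set lsti := (l^n)^(pinf⁻¹) with hlsti_def
  have hlsti1 : 1 ≤ lsti := Real.one_le_rpow hln1 (inv_nonneg.2 hq0.le)
  have hlsti0 : 0 < lsti := lt_of_lt_of_le one_pos hlsti1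
  set Kl := KlC n Ci pm with hKl_def
  have hKl1 : 1 ≤ Kl := one_le_KlC hCi hpm_pos
  have hKl0 : 0 < Kl := lt_of_lt_of_le one_pos hKl1
  set r := Kl * lsti with hr_def
  have hr1 : 1 ≤ r := one_le_mul_of_one_le_of_one_le hKl1 hlsti1
  have hr0 : 0 < r := lt_of_lt_of_le one_pos hr1
  set s := pm/(2*n) with hs_def
  have hs0 : 0 < s := by positivity
  set R := r^s with hR_def
  have hR0 : 0 < R := Real.rpow_pos_of_pos hr0 _
  set N := Metric.closedBall (0 : EuclideanSpace ℝ (Fin n)) R with hN_def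
  have hN : MeasurableSet N := measurableSet_closedBall
  have hvolQ : volume (cube c l) = ENNReal.ofReal (l^n) := volume_cube c hl0.le
  have hvolN : volume N ≤ ENNReal.ofReal ((2*R)^n) := by
    calc volume N ≤ volume (cube (0 : EuclideanSpace ℝ (Fin n)) (2*R)) :=
          measure_mono (norm_ball_subset_cube hR0.le)
      _ = ENNReal.ofReal ((2*R)^n) := volume_cube _ (by positivity)
  apply vnorm_le hppos hQ hr0
  -- split the modular
  have hsplit : mdl p (cube c l) r =
      (∫⁻ x in cube c l ∩ N, ENNReal.ofReal (r ^ (-(p x))) ∂volume) +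
      (∫⁻ x in cube c l \ N, ENNReal.ofReal (r ^ (-(p x))) ∂volume) :=
    (lintegral_inter_add_diff _ _ hN).symm
  -- near region
  have hnear : (∫⁻ x in cube c l ∩ N, ENNReal.ofReal (r ^ (-(p x))) ∂volume) ≤
      ENNReal.ofReal (r^(-pm) * (2*R)^n) := by
    calc (∫⁻ x in cube c l ∩ N, ENNReal.ofReal (r ^ (-(p x))) ∂volume)
        ≤ ∫⁻ _x in cube c l ∩ N, ENNReal.ofReal (r^(-pm)) ∂volume := by
          apply setLIntegral_mono measurable_const
          intro x _
          exact ENNReal.ofReal_le_ofReal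
            (Real.rpow_le_rpow_of_exponent_le hr1 (neg_le_neg (hlow x)))
      _ = ENNReal.ofReal (r^(-pm)) * volume (cube c l ∩ N) := setLIntegral_const _ _
      _ ≤ ENNReal.ofReal (r^(-pm)) * ENNReal.ofReal ((2*R)^n) := by
          apply mul_le_mul_right
          exact le_trans (measure_mono Set.inter_subset_right) hvolN
      _ = ENNReal.ofReal (r^(-pm) * (2*R)^n) :=
          (ENNReal.ofReal_mul (Real.rpow_nonneg hr0.le _)).symm
  -- far region
  have hfar : (∫⁻ x in cube c l \ N, ENNReal.ofReal (r ^ (-(p x))) ∂volume) ≤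
      ENNReal.ofReal (r^(-pinf) * Real.exp (Ci/s) * l^n) := by
    have hpt : ∀ y ∈ cube c l \ N, r ^ (-(p y)) ≤ r^(-pinf) * Real.exp (Ci/s) := by
      rintro y ⟨_, hyN⟩
      have hynorm : R < ‖y‖ := by
        by_contra hc
        push_neg at hc
        exact hyN (by rw [hN_def, Metric.mem_closedBall, dist_zero_right]; exact hc)
      have hLy := hinf y
      have hple : p y ≥ pinf - Ci / Real.log (Real.exp 1 + ‖y‖) := by
        have := abs_le.1 hLy
        linarith [this.1]
      calc r ^ (-(p y)) ≤ r ^ (-pinf + Ci / Real.log (Real.exp 1 + ‖y‖)) := by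
            apply Real.rpow_le_rpow_of_exponent_le hr1
            linarith
        _ = r^(-pinf) * r^(Ci / Real.log (Real.exp 1 + ‖y‖)) := Real.rpow_add hr0 _ _
        _ ≤ r^(-pinf) * Real.exp (Ci/s) := by
            apply mul_le_mul_of_nonneg_left _ (Real.rpow_nonneg hr0.le _)
            exact far_factor hCi hs0 hr1 hynorm.le
    calc (∫⁻ x in cube c l \ N, ENNReal.ofReal (r ^ (-(p x))) ∂volume)
        ≤ ∫⁻ _x in cube c l \ N, ENNReal.ofReal (r^(-pinf) * Real.exp (Ci/s)) ∂volume :=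
          setLIntegral_mono measurable_const fun x hx => ENNReal.ofReal_le_ofReal (hpt x hx)
      _ = ENNReal.ofReal (r^(-pinf) * Real.exp (Ci/s)) * volume (cube c l \ N) :=
          setLIntegral_const _ _
      _ ≤ ENNReal.ofReal (r^(-pinf) * Real.exp (Ci/s)) * ENNReal.ofReal (l^n) := by
          apply mul_le_mul_right
          calc volume (cube c l \ N) ≤ volume (cube c l) := measure_mono Set.diff_subset
            _ = ENNReal.ofReal (l^n) := hvolQ
      _ = ENNReal.ofReal (r^(-pinf) * Real.exp (Ci/s) * l^n) := by
          rw [← ENNReal.ofReal_mul (by positivity)]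
  -- real arithmetic
  have hT1 : r^(-pm) * (2*R)^n ≤ Real.exp (-1) := by
    have e1 : (2*R)^n = 2^n * r^(s*(n:ℕ)) := by
      rw [mul_pow, hR_def, Real.rpow_mul hr0.le, Real.rpow_natCast]
    have e2 : s*(n:ℕ) = pm/2 := by
      rw [hs_def]; field_simp
    have e3 : r^(-pm) * (2*R)^n = 2^n * r^(-(pm/2)) := by
      rw [e1, e2, show (-(pm/2)) = -pm + pm/2 by ring, Real.rpow_add hr0]
      ring
    rw [e3]
    have h4 : r^(-(pm/2)) ≤ Kl^(-(pm/2)) :=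
      rpow_anti hKl0 (le_mul_of_one_le_right hKl0.le hlsti1) (by linarith)
    have h5 : Kl^(-(pm/2)) = Real.exp (-(1 + n + 2*n*Ci/pm)) := by
      rw [hKl_def, KlC, exp_rpow']
      congr 1
      field_simp
    have h6 : (2:ℝ)^n = Real.exp (n * Real.log 2) := by
      rw [← Real.log_pow, Real.exp_log (pow_pos two_pos n)]
    calc (2:ℝ)^n * r^(-(pm/2)) ≤ 2^n * Kl^(-(pm/2)) := by
          apply mul_le_mul_of_nonneg_left h4 (by positivity)
      _ = Real.exp (n * Real.log 2 + -(1 + n + 2*n*Ci/pm)) := by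
          rw [h5, h6, ← Real.exp_add]
      _ ≤ Real.exp (-1) := by
          apply Real.exp_le_exp.2
          have h7 : (n:ℝ) * Real.log 2 ≤ n := by
            calc (n:ℝ) * Real.log 2 ≤ (n:ℝ) * 1 :=
                  mul_le_mul_of_nonneg_left log_two_le_one (Nat.cast_nonneg n)
              _ = n := mul_one _
          have h8 : (0:ℝ) ≤ 2*n*Ci/pm := by positivity
          linarith
  have hT2 : r^(-pinf) * Real.exp (Ci/s) * l^n ≤ Real.exp (-1) := by
    have e1 : r^(-pinf) = Kl^(-pinf) * lsti^(-pinf) := Real.mul_rpow hKl0.le hlsti0.le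
    have e2 : lsti^(-pinf) = (l^n)⁻¹ := by
      rw [hlsti_def, ← Real.rpow_mul hln0.le,
        show pinf⁻¹ * -pinf = -1 by field_simp, Real.rpow_neg_one]
    have e3 : r^(-pinf) * Real.exp (Ci/s) * l^n = Kl^(-pinf) * Real.exp (Ci/s) := by
      rw [e1, e2]
      field_simp
    rw [e3]
    have h4 : Kl^(-pinf) ≤ Kl^(-pm) :=
      Real.rpow_le_rpow_of_exponent_le hKl1 (by linarith)
    have h5 : Kl^(-pm) = Real.exp (-(2 + 2*n + 4*n*Ci/pm)) := by
      rw [hKl_def, KlC, exp_rpow']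
      congr 1
      field_simp
      ring
    have h6 : Ci/s = 2*n*Ci/pm := by
      rw [hs_def]
      field_simp
    calc Kl^(-pinf) * Real.exp (Ci/s) ≤ Kl^(-pm) * Real.exp (Ci/s) :=
          mul_le_mul_of_nonneg_right h4 (Real.exp_pos _).le
      _ = Real.exp (-(2 + 2*n + 4*n*Ci/pm) + 2*n*Ci/pm) := by
          rw [h5, h6, ← Real.exp_add]
      _ ≤ Real.exp (-1) := by
          apply Real.exp_le_exp.2
          have h8 : (0:ℝ) ≤ 2*n*Ci/pm := by positivity
          have h9 : (0:ℝ) ≤ (n:ℝ) := Nat.cast_nonneg n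
          have h10 : 4*(n:ℝ)*Ci/pm = 2*(2*(n:ℝ)*Ci/pm) := by ring
          linarith
  calc mdl p (cube c l) r = _ + _ := hsplit
    _ ≤ ENNReal.ofReal (r^(-pm) * (2*R)^n) + ENNReal.ofReal (r^(-pinf) * Real.exp (Ci/s) * l^n) :=
        add_le_add hnear hfar
    _ ≤ ENNReal.ofReal (Real.exp (-1)) + ENNReal.ofReal (Real.exp (-1)) :=
        add_le_add (ENNReal.ofReal_le_ofReal hT1) (ENNReal.ofReal_le_ofReal hT2)
    _ = ENNReal.ofReal (Real.exp (-1) + Real.exp (-1)) :=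
        (ENNReal.ofReal_add (Real.exp_pos _).le (Real.exp_pos _).le).symm
    _ ≤ 1 := by
        apply ENNReal.ofReal_le_one.2
        have := exp_neg_one_le_half
        linarith


/-- The constant for the large cube lower estimate. -/
def KlC' (n : ℕ) (Ci pm : ℝ) : ℝ :=
  Real.exp ((2 + 2*n*Ci/pm + (n+1) * Real.log 4)/pm)

lemma one_le_KlC' (hCi : 0 < Ci) (hpm : 0 < pm) : 1 ≤ KlC' n Ci pm := by
  apply Real.one_le_exp
  have h1 : (0:ℝ) ≤ 2*n*Ci/pm := by positivity
  have h4 : (0:ℝ) ≤ Real.log 4 := Real.log_nonneg (by norm_num)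
  have h2 : (0:ℝ) ≤ (n:ℝ) := Nat.cast_nonneg n
  positivity

set_option maxHeartbeats 1000000 in
lemma large_lower (hn : 1 ≤ n) (hp : Measurable p)
    (hCi : 0 < Ci) (hinf : ∀ x, |p x - pinf| ≤ Ci / Real.log (Real.exp 1 + ‖x‖))
    (hpm_pos : 0 < pm) (hlow : ∀ x, pm ≤ p x) (hpinf_low : pm ≤ pinf)
    {c : EuclideanSpace ℝ (Fin n)} {l : ℝ} (hl1 : 1 ≤ l) :
    ENNReal.ofReal ((l^n)^(pinf⁻¹) / KlC' n Ci pm) ≤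
      vnorm p ((cube c l).indicator fun _ => (1:ℝ≥0∞)) := by
  have hl0 : 0 < l := lt_of_lt_of_le one_pos hl1
  have hppos : ∀ x, 0 < p x := fun x => lt_of_lt_of_le hpm_pos (hlow x)
  have hQ := measurableSet_cube c l
  have hn0 : (0:ℝ) < n := by exact_mod_cast hn
  have hln0 : 0 < l^n := pow_pos hl0 n
  have hln1 : 1 ≤ l^n := one_le_pow₀ hl1
  have hq0 : 0 < pinf := lt_of_lt_of_le hpm_pos hpinf_low
  set lsti := (l^n)^(pinf⁻¹) with hlsti_def
  have hlsti1 : 1 ≤ lsti := Real.one_le_rpow hln1 (inv_nonneg.2 hq0.le)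
  have hlsti0 : 0 < lsti := lt_of_lt_of_le one_pos hlsti1
  set Kl := KlC' n Ci pm with hKl_def
  have hKl1 : 1 ≤ Kl := one_le_KlC' hCi hpm_pos
  have hKl0 : 0 < Kl := lt_of_lt_of_le one_pos hKl1
  have hlog4 : (0:ℝ) ≤ Real.log 4 := Real.log_nonneg (by norm_num)
  have hX0 : (0:ℝ) ≤ 2*n*Ci/pm := by positivity
  have hvolQ : volume (cube c l) = ENNReal.ofReal (l^n) := volume_cube c hl0.le
  set s := pm/(2*n) with hs_def
  have hs0 : 0 < s := by positivity
  apply le_vnorm hppos hQ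
  intro r hr0 hmod
  -- step 1 : 1 ≤ r
  have hstep1 : 1 ≤ r := by
    by_contra hcon
    push_neg at hcon
    have hpt : ∀ y ∈ cube c l, r^(-pm) ≤ r^(-(p y)) := fun y _ =>
      Real.rpow_le_rpow_of_exponent_ge hr0 hcon.le (neg_le_neg (hlow y))
    have hge : ENNReal.ofReal (r^(-pm)) * volume (cube c l) ≤ mdl p (cube c l) r :=
      const_le_mdl hp subset_rfl hr0 hpt
    have hle1 : r^(-pm) * l^n ≤ 1 := by
      rw [← ENNReal.ofReal_le_one, ENNReal.ofReal_mul (Real.rpow_nonneg hr0.le _)]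
      calc ENNReal.ofReal (r^(-pm)) * ENNReal.ofReal (l^n)
          = ENNReal.ofReal (r^(-pm)) * volume (cube c l) := by rw [hvolQ]
        _ ≤ mdl p (cube c l) r := hge
        _ ≤ 1 := hmod
    have h1 : (1:ℝ) < r^(-pm) := by
      have := rpow_anti_strict hr0 hcon (show -pm < 0 by linarith)
      simpa using this
    nlinarith
  by_cases hV : l^n < 4^(n+1)
  · -- small volume case : lsti ≤ Kl hence lsti/Kl ≤ 1 ≤ r
    have h1 : lsti ≤ Kl := by
      have h2 : lsti ≤ ((4:ℝ)^(n+1))^(pinf⁻¹) :=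
        Real.rpow_le_rpow hln0.le hV.le (inv_nonneg.2 hq0.le)
      have h3 : ((4:ℝ)^(n+1))^(pinf⁻¹) ≤ ((4:ℝ)^(n+1))^(pm⁻¹) := by
        apply Real.rpow_le_rpow_of_exponent_le (one_le_pow₀ (by norm_num))
        exact inv_anti₀ hpm_pos hpinf_low
      have h4 : ((4:ℝ)^(n+1))^(pm⁻¹) = Real.exp (((n:ℝ)+1) * Real.log 4 / pm) := by
        have e : ((4:ℝ)^(n+1)) = Real.exp ((((n+1 : ℕ)) : ℝ) * Real.log 4) := by
          rw [← Real.log_pow, Real.exp_log (pow_pos (by norm_num) _)]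
        rw [e, exp_rpow']
        congr 1
        push_cast
        rw [div_eq_mul_inv]
      have h5 : Real.exp (((n:ℝ)+1) * Real.log 4 / pm) ≤ Kl := by
        rw [hKl_def, KlC']
        apply Real.exp_le_exp.2
        rw [div_le_div_iff_of_pos_right hpm_pos]
        linarith
      linarith
    have : lsti / Kl ≤ 1 := by rw [div_le_one hKl0]; exact h1
    linarith
  · -- main case
    push_neg at hV
    by_contra hcon
    push_neg at hcon
    set R := r^s with hR_def
    have hR0 : 0 < R := Real.rpow_pos_of_pos hr0 _
    set N := Metric.closedBall (0 : EuclideanSpace ℝ (Fin n)) R with hN_def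
    have hN : MeasurableSet N := measurableSet_closedBall
    have hvolN : volume N ≤ ENNReal.ofReal ((2*R)^n) := by
      calc volume N ≤ volume (cube (0 : EuclideanSpace ℝ (Fin n)) (2*R)) :=
            measure_mono (norm_ball_subset_cube hR0.le)
        _ = ENNReal.ofReal ((2*R)^n) := volume_cube _ (by positivity)
    -- (2R)^n ≤ l^n / 2
    have hhalf : (2*R)^n ≤ l^n / 2 := by
      set a := (l^n)^((2:ℝ)⁻¹) with ha_def
      have ha0 : 0 ≤ a := (Real.rpow_pos_of_pos hln0 _).le
      have ha2 : a^2 = l^n := by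
        rw [ha_def, ← Real.rpow_natCast ((l^n)^((2:ℝ)⁻¹)) 2, ← Real.rpow_mul hln0.le]
        norm_num
      set b := (2:ℝ)^n with hb_def
      have hb0 : (0:ℝ) < b := pow_pos two_pos n
      have hb2 : 4 * b^2 = 4^(n+1) := by
        rw [hb_def, ← pow_mul, show n*2 = 2*n by ring, pow_mul, pow_succ]
        norm_num
        ring
      have hage : 2*b ≤ a := by
        by_contra hcc
        push_neg at hcc
        have hsq : a^2 < 4*b^2 := by nlinarith
        rw [ha2, hb2] at hsq
        linarith
      -- r^(pm/2) ≤ a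
      have hrle : r^(pm/2) ≤ a := by
        have h1 : r ≤ lsti := by
          calc r ≤ lsti / Kl := hcon.le
            _ ≤ lsti / 1 := by apply div_le_div_of_nonneg_left hlsti0.le one_pos hKl1
            _ = lsti := div_one _
        have h2 : r^(pm/2) ≤ lsti^(pm/2) := Real.rpow_le_rpow hr0.le h1 (by positivity)
        have h3 : lsti^(pm/2) = (l^n)^(pinf⁻¹ * (pm/2)) := by
          rw [hlsti_def, ← Real.rpow_mul hln0.le]
        have h4 : (l^n)^(pinf⁻¹ * (pm/2)) ≤ (l^n)^((2:ℝ)⁻¹) := by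
          apply Real.rpow_le_rpow_of_exponent_le hln1
          rw [show pinf⁻¹ * (pm/2) = (pm/pinf)/2 by ring]
          have : pm/pinf ≤ 1 := by
            rw [div_le_one hq0]; exact hpinf_low
          linarith
        calc r^(pm/2) ≤ lsti^(pm/2) := h2
          _ = (l^n)^(pinf⁻¹ * (pm/2)) := h3
          _ ≤ a := h4
      have hRn : (2*R)^n = b * r^(pm/2) := by
        rw [mul_pow, hR_def, ← Real.rpow_natCast (r^s) n, ← Real.rpow_mul hr0.le, hb_def]
        congr 2
        rw [hs_def]
        field_simp
      rw [hRn]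
      have haa : a * a = l^n := by rw [← ha2]; ring
      calc b * r^(pm/2) ≤ b * a := mul_le_mul_of_nonneg_left hrle hb0.le
        _ ≤ (a/2) * a := mul_le_mul_of_nonneg_right (by linarith) ha0
        _ = l^n/2 := by rw [show (a/2)*a = a*a/2 by ring, haa]
    -- lower bound for volume of the far region
    have hvolF : ENNReal.ofReal (l^n / 2) ≤ volume (cube c l \ N) := by
      have h1 : volume (cube c l) - volume N ≤ volume (cube c l \ N) :=
        le_measure_diff
      have h2 : ENNReal.ofReal (l^n) - ENNReal.ofReal ((2*R)^n) ≤
          volume (cube c l) - volume N := by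
        rw [hvolQ]
        exact tsub_le_tsub_left hvolN _
      have h3 : ENNReal.ofReal (l^n / 2) ≤ ENNReal.ofReal (l^n) - ENNReal.ofReal ((2*R)^n) := by
        rw [← ENNReal.ofReal_sub _ (by positivity : (0:ℝ) ≤ (2*R)^n)]
        apply ENNReal.ofReal_le_ofReal
        linarith
      exact h3.trans (h2.trans h1)
    -- pointwise lower bound on the far region
    have hpt : ∀ y ∈ cube c l \ N, r^(-pinf) * Real.exp (-(Ci/s)) ≤ r^(-(p y)) := by
      rintro y ⟨_, hyN⟩
      have hynorm : R < ‖y‖ := by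
        by_contra hc
        push_neg at hc
        exact hyN (by rw [hN_def, Metric.mem_closedBall, dist_zero_right]; exact hc)
      have hLy := hinf y
      have hpge : p y ≤ pinf + Ci / Real.log (Real.exp 1 + ‖y‖) := by
        have := abs_le.1 hLy
        linarith [this.2]
      have hff : r^(Ci / Real.log (Real.exp 1 + ‖y‖)) ≤ Real.exp (Ci/s) :=
        far_factor hCi hs0 hstep1 hynorm.le
      have hffpos : (0:ℝ) < r^(Ci / Real.log (Real.exp 1 + ‖y‖)) :=
        Real.rpow_pos_of_pos hr0 _
      calc r^(-pinf) * Real.exp (-(Ci/s))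
          = r^(-pinf) * (Real.exp (Ci/s))⁻¹ := by rw [Real.exp_neg]
        _ ≤ r^(-pinf) * (r^(Ci / Real.log (Real.exp 1 + ‖y‖)))⁻¹ := by
            apply mul_le_mul_of_nonneg_left _ (Real.rpow_nonneg hr0.le _)
            exact inv_anti₀ hffpos hff
        _ = r^(-pinf - Ci / Real.log (Real.exp 1 + ‖y‖)) := by
            rw [show -pinf - Ci / Real.log (Real.exp 1 + ‖y‖) =
              -pinf + -(Ci / Real.log (Real.exp 1 + ‖y‖)) by ring,
              Real.rpow_add hr0, Real.rpow_neg hr0.le, Real.rpow_neg hr0.le]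
        _ ≤ r^(-(p y)) := by
            apply Real.rpow_le_rpow_of_exponent_le hstep1
            linarith
    -- combine
    have hge : ENNReal.ofReal (r^(-pinf) * Real.exp (-(Ci/s))) * volume (cube c l \ N) ≤
        mdl p (cube c l) r :=
      const_le_mdl hp Set.diff_subset hr0 hpt
    have hB0 : (0:ℝ) ≤ r^(-pinf) * Real.exp (-(Ci/s)) := by positivity
    have hle1 : (r^(-pinf) * Real.exp (-(Ci/s))) * (l^n/2) ≤ 1 := by
      rw [← ENNReal.ofReal_le_one, ENNReal.ofReal_mul hB0]
      calc ENNReal.ofReal (r^(-pinf) * Real.exp (-(Ci/s))) * ENNReal.ofReal (l^n/2)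
          ≤ ENNReal.ofReal (r^(-pinf) * Real.exp (-(Ci/s))) * volume (cube c l \ N) :=
            mul_le_mul_right hvolF _
        _ ≤ mdl p (cube c l) r := hge
        _ ≤ 1 := hmod
    -- but the left side is > 1
    have hgt1 : (1:ℝ) < (r^(-pinf) * Real.exp (-(Ci/s))) * (l^n/2) := by
      have hXgt : (lsti/Kl)^(-pinf) < r^(-pinf) :=
        rpow_anti_strict hr0 hcon (by linarith)
      have hX'eq : (lsti/Kl)^(-pinf) = (l^n)⁻¹ * Kl^pinf := by
        rw [Real.div_rpow hlsti0.le hKl0.le]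
        have e3 : lsti^(-pinf) = (l^n)⁻¹ := by
          rw [hlsti_def, ← Real.rpow_mul hln0.le,
            show pinf⁻¹ * -pinf = -1 by field_simp, Real.rpow_neg_one]
        rw [e3, Real.rpow_neg hKl0.le]
        rw [div_eq_mul_inv, inv_inv]
      have hKsq : Real.exp (2 + 2*n*Ci/pm + ((n:ℝ)+1) * Real.log 4) ≤ Kl^pinf := by
        calc Real.exp (2 + 2*n*Ci/pm + ((n:ℝ)+1) * Real.log 4) = Kl^pm := by
              rw [hKl_def, KlC', exp_rpow', div_mul_cancel₀ _ hpm_pos.ne']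
          _ ≤ Kl^pinf := Real.rpow_le_rpow_of_exponent_le hKl1 hpinf_low
      have hCis : Ci/s = 2*n*Ci/pm := by
        rw [hs_def]; field_simp
      have hXlow : (l^n)⁻¹ * Real.exp (2 + 2*n*Ci/pm + ((n:ℝ)+1) * Real.log 4) < r^(-pinf) := by
        calc (l^n)⁻¹ * Real.exp (2 + 2*n*Ci/pm + ((n:ℝ)+1) * Real.log 4)
            ≤ (l^n)⁻¹ * Kl^pinf := mul_le_mul_of_nonneg_left hKsq (by positivity)
          _ = (lsti/Kl)^(-pinf) := hX'eq.symm
          _ < r^(-pinf) := hXgt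
      have hprod : ((l^n)⁻¹ * Real.exp (2 + 2*n*Ci/pm + ((n:ℝ)+1) * Real.log 4)) *
          Real.exp (-(Ci/s)) * (l^n/2) <
          (r^(-pinf) * Real.exp (-(Ci/s))) * (l^n/2) := by
        apply mul_lt_mul_of_pos_right _ (by positivity)
        exact mul_lt_mul_of_pos_right hXlow (Real.exp_pos _)
      have hval : ((l^n)⁻¹ * Real.exp (2 + 2*n*Ci/pm + ((n:ℝ)+1) * Real.log 4)) *
          Real.exp (-(Ci/s)) * (l^n/2) = Real.exp (2 + ((n:ℝ)+1) * Real.log 4) / 2 := by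
        rw [hCis]
        have hEE : Real.exp (2 + 2*(n:ℝ)*Ci/pm + ((n:ℝ)+1) * Real.log 4) *
            Real.exp (-(2*(n:ℝ)*Ci/pm)) = Real.exp (2 + ((n:ℝ)+1) * Real.log 4) := by
          rw [← Real.exp_add]; congr 1; ring
        calc ((l^n)⁻¹ * Real.exp (2 + 2*(n:ℝ)*Ci/pm + ((n:ℝ)+1) * Real.log 4)) *
            Real.exp (-(2*(n:ℝ)*Ci/pm)) * (l^n/2)
            = (Real.exp (2 + 2*(n:ℝ)*Ci/pm + ((n:ℝ)+1) * Real.log 4) *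
              Real.exp (-(2*(n:ℝ)*Ci/pm))) * ((l^n)⁻¹ * l^n) / 2 := by ring
          _ = Real.exp (2 + ((n:ℝ)+1) * Real.log 4) * 1 / 2 := by
              rw [hEE, inv_mul_cancel₀ hln0.ne']
          _ = Real.exp (2 + ((n:ℝ)+1) * Real.log 4) / 2 := by ring
      have hbig : (1:ℝ) < Real.exp (2 + ((n:ℝ)+1) * Real.log 4) / 2 := by
        have h1 : Real.exp 2 ≤ Real.exp (2 + ((n:ℝ)+1) * Real.log 4) := by
          apply Real.exp_le_exp.2
          have : (0:ℝ) ≤ ((n:ℝ)+1) * Real.log 4 := by positivity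
          linarith
        have h2 : (2:ℝ) ≤ Real.exp 1 := by linarith [Real.add_one_le_exp 1]
        have h3 : (4:ℝ) ≤ Real.exp 2 := by
          calc (4:ℝ) = 2 * 2 := by norm_num
            _ ≤ Real.exp 1 * Real.exp 1 := by nlinarith
            _ = Real.exp 2 := by rw [← Real.exp_add]; norm_num
        linarith
      calc (1:ℝ) < Real.exp (2 + ((n:ℝ)+1) * Real.log 4) / 2 := hbig
        _ = ((l^n)⁻¹ * Real.exp (2 + 2*n*Ci/pm + ((n:ℝ)+1) * Real.log 4)) *
            Real.exp (-(Ci/s)) * (l^n/2) := hval.symm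
        _ < (r^(-pinf) * Real.exp (-(Ci/s))) * (l^n/2) := hprod
    linarith

end Large


lemma center_mem_cube {c : EuclideanSpace ℝ (Fin n)} {l : ℝ} (hl : 0 ≤ l) : c ∈ cube c l := by
  intro i
  simp only [sub_self, abs_zero]
  linarith

lemma side_le_of_subset (hn : 1 ≤ n) {c₁ c₂ : EuclideanSpace ℝ (Fin n)} {l₁ l₂ : ℝ}
    (hl₁ : 0 < l₁) (hsub : cube c₁ l₁ ⊆ cube c₂ l₂) : l₁ ≤ l₂ := by
  set i0 : Fin n := ⟨0, hn⟩
  set v : EuclideanSpace ℝ (Fin n) := (WithLp.equiv 2 _).symm (fun _ => l₁/2) with hv_def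
  have hvj : ∀ j, v j = l₁/2 := fun j => rfl
  have hy₁ : c₁ + v ∈ cube c₁ l₁ := by
    intro j
    have : (c₁ + v) j = c₁ j + l₁/2 := by
      simp [hvj j]
    rw [this]
    simp [abs_of_nonneg (by linarith : (0:ℝ) ≤ l₁/2)]
  have hy₂ : c₁ - v ∈ cube c₁ l₁ := by
    intro j
    have : (c₁ - v) j = c₁ j - l₁/2 := by
      simp [hvj j]
    rw [this]
    simp [abs_of_nonneg (by linarith : (0:ℝ) ≤ l₁/2)]
  have h₁ := hsub hy₁ i0
  have h₂ := hsub hy₂ i0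
  have e₁ : (c₁ + v) i0 = c₁ i0 + l₁/2 := by simp [hvj i0]
  have e₂ : (c₁ - v) i0 = c₁ i0 - l₁/2 := by simp [hvj i0]
  rw [e₁] at h₁
  rw [e₂] at h₂
  have a₁ := abs_le.1 h₁
  have a₂ := abs_le.1 h₂
  linarith [a₁.1, a₁.2, a₂.1, a₂.2]

lemma pinf_bounds (hn : 1 ≤ n) {p : EuclideanSpace ℝ (Fin n) → ℝ} {Ci pinf pm pp : ℝ}
    (hCi : 0 < Ci) (hinf : ∀ x, |p x - pinf| ≤ Ci / Real.log (Real.exp 1 + ‖x‖))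
    (hlow : ∀ x, pm ≤ p x) (hhigh : ∀ x, p x ≤ pp) : pm ≤ pinf ∧ pinf ≤ pp := by
  have key : ∀ ε : ℝ, 0 < ε → ∃ x : EuclideanSpace ℝ (Fin n), |p x - pinf| ≤ ε := by
    intro ε hε
    set i0 : Fin n := ⟨0, hn⟩
    set T := Real.exp (Ci/ε) with hT_def
    have hT0 : 0 < T := Real.exp_pos _
    refine ⟨EuclideanSpace.single i0 T, ?_⟩
    have hnorm : ‖EuclideanSpace.single i0 T‖ = T := by
      rw [EuclideanSpace.norm_single]
      exact abs_of_pos hT0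
    have hL : Ci/ε ≤ Real.log (Real.exp 1 + ‖EuclideanSpace.single i0 T‖) := by
      rw [hnorm]
      calc Ci/ε = Real.log T := (Real.log_exp _).symm
        _ ≤ Real.log (Real.exp 1 + T) := Real.log_le_log hT0 (by linarith [Real.exp_pos 1])
    have hL0 : 0 < Ci/ε := div_pos hCi hε
    calc |p (EuclideanSpace.single i0 T) - pinf|
        ≤ Ci / Real.log (Real.exp 1 + ‖EuclideanSpace.single i0 T‖) := hinf _
      _ ≤ Ci / (Ci/ε) := div_le_div_of_nonneg_left hCi.le hL0 hL
      _ = ε := by field_simp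
  constructor
  · apply _root_.le_of_forall_pos_le_add
    intro ε hε
    obtain ⟨x, hx⟩ := key ε hε
    have := abs_le.1 hx
    have := hlow x
    linarith [(abs_le.1 hx).2]
  · apply _root_.le_of_forall_pos_le_add
    intro ε hε
    obtain ⟨x, hx⟩ := key ε hε
    have := hhigh x
    linarith [(abs_le.1 hx).1]

/-- the final combination lemma -/
lemma combine {v₁ v₂ : ℝ≥0∞} {K m₁ m₂ ρm ρp : ℝ}
    (hK : 1 ≤ K) (hm₁ : 0 ≤ m₁) (hm₂ : 0 ≤ m₂) (hρm : 0 ≤ ρm) (hρp : 0 ≤ ρp)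
    (hub1 : v₁ ≤ ENNReal.ofReal (K * m₁)) (hlb1 : ENNReal.ofReal (m₁/K) ≤ v₁)
    (hub2 : v₂ ≤ ENNReal.ofReal (K * m₂)) (hlb2 : ENNReal.ofReal (m₂/K) ≤ v₂)
    (key1 : ρm * m₂ ≤ m₁) (key2 : m₁ ≤ ρp * m₂) :
    ENNReal.ofReal ρm * v₂ ≤ ENNReal.ofReal (K^2) * v₁ ∧
    v₁ ≤ ENNReal.ofReal (K^2 * ρp) * v₂ := by
  have hK0 : 0 < K := lt_of_lt_of_le one_pos hK
  constructor
  · calc ENNReal.ofReal ρm * v₂ ≤ ENNReal.ofReal ρm * ENNReal.ofReal (K * m₂) :=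
          mul_le_mul_right hub2 _
      _ = ENNReal.ofReal (ρm * (K * m₂)) := (ENNReal.ofReal_mul hρm).symm
      _ ≤ ENNReal.ofReal (K^2 * (m₁/K)) := by
          apply ENNReal.ofReal_le_ofReal
          have h1 : K^2 * (m₁/K) = K * m₁ := by field_simp
          rw [h1]
          calc ρm * (K * m₂) = K * (ρm * m₂) := by ring
            _ ≤ K * m₁ := mul_le_mul_of_nonneg_left key1 hK0.le
      _ = ENNReal.ofReal (K^2) * ENNReal.ofReal (m₁/K) := by
          rw [← ENNReal.ofReal_mul (by positivity)]
      _ ≤ ENNReal.ofReal (K^2) * v₁ := mul_le_mul_right hlb1 _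
  · calc v₁ ≤ ENNReal.ofReal (K * m₁) := hub1
      _ ≤ ENNReal.ofReal (K^2 * ρp * (m₂/K)) := by
          apply ENNReal.ofReal_le_ofReal
          have h1 : K^2 * ρp * (m₂/K) = K * (ρp * m₂) := by field_simp
          rw [h1]
          exact mul_le_mul_of_nonneg_left key2 hK0.le
      _ = ENNReal.ofReal (K^2 * ρp) * ENNReal.ofReal (m₂/K) := by
          rw [← ENNReal.ofReal_mul (by positivity)]
      _ ≤ ENNReal.ofReal (K^2 * ρp) * v₂ := mul_le_mul_right hlb2 _

end S16

/-- comparison of `L^(p(·))` norms of indicators of nested cubes. -/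
theorem stmt16 (n : ℕ) (hn : 1 ≤ n)
    (p : EuclideanSpace ℝ (Fin n) → ℝ) (hp : Measurable p) (hplog : LogHolder p)
    (pm pp : ℝ)
    (hpm : pm = essInf p (volume : Measure (EuclideanSpace ℝ (Fin n))))
    (hpp : pp = essSup p (volume : Measure (EuclideanSpace ℝ (Fin n))))
    (hpm_pos : 0 < pm) (hpmpp : pm ≤ pp)
    (hbdd : ∀ᵐ x ∂(volume : Measure (EuclideanSpace ℝ (Fin n))), p x ≤ pp)
 :
    ∃ C : ℝ, 0 < C ∧ ∀ (c₁ c₂ : EuclideanSpace ℝ (Fin n)) (l₁ l₂ : ℝ), 0 < l₁ → 0 < l₂ →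
      cube c₁ l₁ ⊆ cube c₂ l₂ →
      ENNReal.ofReal ((l₁ ^ n / l₂ ^ n) ^ ((1 : ℝ) / pm)) *
          vnorm p ((cube c₂ l₂).indicator fun _ => (1 : ℝ≥0∞)) ≤
        ENNReal.ofReal C * vnorm p ((cube c₁ l₁).indicator fun _ => (1 : ℝ≥0∞)) ∧
      vnorm p ((cube c₁ l₁).indicator fun _ => (1 : ℝ≥0∞)) ≤
        ENNReal.ofReal (C * (l₁ ^ n / l₂ ^ n) ^ ((1 : ℝ) / pp)) *
          vnorm p ((cube c₂ l₂).indicator fun _ => (1 : ℝ≥0∞)) := by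
  obtain ⟨⟨C₀, hC₀, hloc⟩, ⟨Ci, hCi, pinf, hinf⟩⟩ := hplog
  have hcont : Continuous p := S16.continuous_of_logHolder hC₀ hloc
  have hLbound : ∀ x : EuclideanSpace ℝ (Fin n), pinf - Ci ≤ p x := by
    intro x
    have h1 : 1 ≤ Real.log (Real.exp 1 + ‖x‖) := S16.one_le_logE (norm_nonneg x)
    have h2 : Ci / Real.log (Real.exp 1 + ‖x‖) ≤ Ci := div_le_self hCi.le h1
    have h3 := (abs_le.1 (hinf x)).1
    linarith
  have hbddb : Filter.IsBoundedUnder (· ≥ ·) (MeasureTheory.ae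
      (volume : Measure (EuclideanSpace ℝ (Fin n)))) p :=
    ⟨pinf - Ci, Filter.eventually_map.2 (Filter.Eventually.of_forall hLbound)⟩
  have hae_low : ∀ᵐ x ∂(volume : Measure (EuclideanSpace ℝ (Fin n))), pm ≤ p x := by
    rw [hpm]; exact ae_essInf_le hbddb
  have hlow : ∀ x, pm ≤ p x := S16.ge_of_ae_le_continuous hcont hae_low
  have hhigh : ∀ x, p x ≤ pp := S16.le_of_ae_ge_continuous hcont hbdd
  obtain ⟨hpim, hpiM⟩ := S16.pinf_bounds hn hCi hinf hlow hhigh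
  have hpp_pos : 0 < pp := lt_of_lt_of_le hpm_pos hpmpp
  have hpinf0 : 0 < pinf := lt_of_lt_of_le hpm_pos hpim
  set K := max (max (S16.KsC n C₀ pm) (S16.KlC n Ci pm)) (S16.KlC' n Ci pm) with hK_def
  have hKs_le : S16.KsC n C₀ pm ≤ K := le_trans (le_max_left _ _) (le_max_left _ _)
  have hKl_le : S16.KlC n Ci pm ≤ K := le_trans (le_max_right _ _) (le_max_left _ _)
  have hKl'_le : S16.KlC' n Ci pm ≤ K := le_max_right _ _
  have hK1 : 1 ≤ K := le_trans (S16.one_le_KsC hC₀ hpm_pos hn) hKs_le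
  have hK0 : 0 < K := lt_of_lt_of_le one_pos hK1
  have hKsC0 : 0 < S16.KsC n C₀ pm :=
    lt_of_lt_of_le one_pos (S16.one_le_KsC hC₀ hpm_pos hn)
  have hKlC0 : 0 < S16.KlC n Ci pm :=
    lt_of_lt_of_le one_pos (S16.one_le_KlC hCi hpm_pos)
  have hKlC'0 : 0 < S16.KlC' n Ci pm :=
    lt_of_lt_of_le one_pos (S16.one_le_KlC' hCi hpm_pos)
  refine ⟨K^2, by positivity, ?_⟩
  intro c₁ c₂ l₁ l₂ hl₁ hl₂ hsub
  have hl12 : l₁ ≤ l₂ := S16.side_le_of_subset hn hl₁ hsub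
  have hc₁Q₂ : c₁ ∈ cube c₂ l₂ := hsub (S16.center_mem_cube hl₁.le)
  have hln₁ : 0 < l₁^n := pow_pos hl₁ n
  have hln₂ : 0 < l₂^n := pow_pos hl₂ n
  set ρ := l₁^n / l₂^n with hρ_def
  have hρ0 : 0 < ρ := by positivity
  have hρ1 : ρ ≤ 1 := by
    rw [div_le_one hln₂]
    exact pow_le_pow_left₀ hl₁.le hl12 n
  have hρmul : ρ * l₂^n = l₁^n := div_mul_cancel₀ _ hln₂.ne'
  -- generic upgrade of bounds from a specific constant to K
  have upg_ub : ∀ (K' m : ℝ) (v : ℝ≥0∞), 0 < K' → K' ≤ K → 0 ≤ m →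
      v ≤ ENNReal.ofReal (K' * m) → v ≤ ENNReal.ofReal (K * m) := by
    intro K' m v hK'0 hK'K hm h
    exact h.trans (ENNReal.ofReal_le_ofReal (mul_le_mul_of_nonneg_right hK'K hm))
  have upg_lb : ∀ (K' m : ℝ) (v : ℝ≥0∞), 0 < K' → K' ≤ K → 0 ≤ m →
      ENNReal.ofReal (m / K') ≤ v → ENNReal.ofReal (m / K) ≤ v := by
    intro K' m v hK'0 hK'K hm h
    refine le_trans (ENNReal.ofReal_le_ofReal ?_) h
    exact div_le_div_of_nonneg_left hm hK'0 hK'K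
  by_cases hl₂1 : l₂ ≤ 1
  · -- Case A : both cubes small
    have hl₁1 : l₁ ≤ 1 := hl12.trans hl₂1
    set q := p c₁ with hq_def
    have hqm : pm ≤ q := hlow c₁
    have hqp : q ≤ pp := hhigh c₁
    have hq0 : 0 < q := lt_of_lt_of_le hpm_pos hqm
    set m₁ := (l₁^n)^(q⁻¹) with hm₁_def
    set m₂ := (l₂^n)^(q⁻¹) with hm₂_def
    have hm₁0 : 0 < m₁ := Real.rpow_pos_of_pos hln₁ _
    have hm₂0 : 0 < m₂ := Real.rpow_pos_of_pos hln₂ _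
    have hub1 := upg_ub _ _ _ hKsC0 hKs_le hm₁0.le
      (S16.small_upper hn hp hC₀ hloc hpm_pos hlow hl₁ hl₁1 (S16.center_mem_cube hl₁.le))
    have hlb1 := upg_lb _ _ _ hKsC0 hKs_le hm₁0.le
      (S16.small_lower hn hp hC₀ hloc hpm_pos hlow hl₁ hl₁1 (S16.center_mem_cube hl₁.le))
    have hub2 := upg_ub _ _ _ hKsC0 hKs_le hm₂0.le
      (S16.small_upper hn hp hC₀ hloc hpm_pos hlow hl₂ hl₂1 hc₁Q₂)
    have hlb2 := upg_lb _ _ _ hKsC0 hKs_le hm₂0.le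
      (S16.small_lower hn hp hC₀ hloc hpm_pos hlow hl₂ hl₂1 hc₁Q₂)
    have hsplitm : m₁ = ρ^(q⁻¹) * m₂ := by
      rw [hm₁_def, hm₂_def, ← Real.mul_rpow hρ0.le hln₂.le, hρmul]
    have key1 : ρ^((1:ℝ)/pm) * m₂ ≤ m₁ := by
      rw [hsplitm]
      apply mul_le_mul_of_nonneg_right _ hm₂0.le
      apply Real.rpow_le_rpow_of_exponent_ge hρ0 hρ1
      rw [one_div]
      exact inv_anti₀ hpm_pos hqm
    have key2 : m₁ ≤ ρ^((1:ℝ)/pp) * m₂ := by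
      rw [hsplitm]
      apply mul_le_mul_of_nonneg_right _ hm₂0.le
      apply Real.rpow_le_rpow_of_exponent_ge hρ0 hρ1
      rw [one_div]
      exact inv_anti₀ hq0 hqp
    exact S16.combine hK1 hm₁0.le hm₂0.le (Real.rpow_nonneg hρ0.le _)
      (Real.rpow_nonneg hρ0.le _) hub1 hlb1 hub2 hlb2 key1 key2
  · push_neg at hl₂1
    by_cases hl₁1 : 1 ≤ l₁
    · -- Case B : both cubes large
      set m₁ := (l₁^n)^(pinf⁻¹) with hm₁_def
      set m₂ := (l₂^n)^(pinf⁻¹) with hm₂_def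
      have hm₁0 : 0 < m₁ := Real.rpow_pos_of_pos hln₁ _
      have hm₂0 : 0 < m₂ := Real.rpow_pos_of_pos hln₂ _
      have hub1 := upg_ub _ _ _ hKlC0 hKl_le hm₁0.le
        (S16.large_upper hn hp hCi hinf hpm_pos hlow hpim (c := c₁) hl₁1)
      have hlb1 := upg_lb _ _ _ hKlC'0 hKl'_le hm₁0.le
        (S16.large_lower hn hp hCi hinf hpm_pos hlow hpim (c := c₁) hl₁1)
      have hub2 := upg_ub _ _ _ hKlC0 hKl_le hm₂0.le
        (S16.large_upper hn hp hCi hinf hpm_pos hlow hpim (c := c₂) (hl₁1.trans hl12))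
      have hlb2 := upg_lb _ _ _ hKlC'0 hKl'_le hm₂0.le
        (S16.large_lower hn hp hCi hinf hpm_pos hlow hpim (c := c₂) (hl₁1.trans hl12))
      have hsplitm : m₁ = ρ^(pinf⁻¹) * m₂ := by
        rw [hm₁_def, hm₂_def, ← Real.mul_rpow hρ0.le hln₂.le, hρmul]
      have key1 : ρ^((1:ℝ)/pm) * m₂ ≤ m₁ := by
        rw [hsplitm]
        apply mul_le_mul_of_nonneg_right _ hm₂0.le
        apply Real.rpow_le_rpow_of_exponent_ge hρ0 hρ1
        rw [one_div]
        exact inv_anti₀ hpm_pos hpim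
      have key2 : m₁ ≤ ρ^((1:ℝ)/pp) * m₂ := by
        rw [hsplitm]
        apply mul_le_mul_of_nonneg_right _ hm₂0.le
        apply Real.rpow_le_rpow_of_exponent_ge hρ0 hρ1
        rw [one_div]
        exact inv_anti₀ hpinf0 hpiM
      exact S16.combine hK1 hm₁0.le hm₂0.le (Real.rpow_nonneg hρ0.le _)
        (Real.rpow_nonneg hρ0.le _) hub1 hlb1 hub2 hlb2 key1 key2
    · -- Case C : small inside large
      push_neg at hl₁1
      have hl₁1' : l₁ ≤ 1 := hl₁1.le
      have hl₂1' : 1 ≤ l₂ := hl₂1.le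
      have hln₁1 : l₁^n ≤ 1 := pow_le_one₀ hl₁.le hl₁1'
      have hln₂1 : 1 ≤ l₂^n := one_le_pow₀ hl₂1'
      set q := p c₁ with hq_def
      have hqm : pm ≤ q := hlow c₁
      have hqp : q ≤ pp := hhigh c₁
      have hq0 : 0 < q := lt_of_lt_of_le hpm_pos hqm
      set m₁ := (l₁^n)^(q⁻¹) with hm₁_def
      set m₂ := (l₂^n)^(pinf⁻¹) with hm₂_def
      have hm₁0 : 0 < m₁ := Real.rpow_pos_of_pos hln₁ _
      have hm₂0 : 0 < m₂ := Real.rpow_pos_of_pos hln₂ _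
      have hub1 := upg_ub _ _ _ hKsC0 hKs_le hm₁0.le
        (S16.small_upper hn hp hC₀ hloc hpm_pos hlow hl₁ hl₁1' (S16.center_mem_cube hl₁.le))
      have hlb1 := upg_lb _ _ _ hKsC0 hKs_le hm₁0.le
        (S16.small_lower hn hp hC₀ hloc hpm_pos hlow hl₁ hl₁1' (S16.center_mem_cube hl₁.le))
      have hub2 := upg_ub _ _ _ hKlC0 hKl_le hm₂0.le
        (S16.large_upper hn hp hCi hinf hpm_pos hlow hpim (c := c₂) hl₂1')
      have hlb2 := upg_lb _ _ _ hKlC'0 hKl'_le hm₂0.le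
        (S16.large_lower hn hp hCi hinf hpm_pos hlow hpim (c := c₂) hl₂1')
      have hρ_split : ∀ e : ℝ, ρ^e = (l₁^n)^e / (l₂^n)^e := fun e =>
        Real.div_rpow hln₁.le hln₂.le e
      have key1 : ρ^((1:ℝ)/pm) * m₂ ≤ m₁ := by
        rw [hρ_split]
        have h2a : m₂ ≤ (l₂^n)^((1:ℝ)/pm) := by
          rw [hm₂_def]
          apply Real.rpow_le_rpow_of_exponent_le hln₂1
          rw [one_div]
          exact inv_anti₀ hpm_pos hpim
        have h2b : (0:ℝ) < (l₂^n)^((1:ℝ)/pm) := Real.rpow_pos_of_pos hln₂ _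
        have h2c : (l₁^n)^((1:ℝ)/pm) ≤ m₁ := by
          rw [hm₁_def]
          apply Real.rpow_le_rpow_of_exponent_ge hln₁ hln₁1
          rw [one_div]
          exact inv_anti₀ hpm_pos hqm
        calc (l₁^n)^((1:ℝ)/pm) / (l₂^n)^((1:ℝ)/pm) * m₂
            = (l₁^n)^((1:ℝ)/pm) * (m₂ / (l₂^n)^((1:ℝ)/pm)) := by ring
          _ ≤ (l₁^n)^((1:ℝ)/pm) * 1 := by
              apply mul_le_mul_of_nonneg_left _ (Real.rpow_nonneg hln₁.le _)
              rw [div_le_one h2b]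
              exact h2a
          _ = (l₁^n)^((1:ℝ)/pm) := mul_one _
          _ ≤ m₁ := h2c
      have key2 : m₁ ≤ ρ^((1:ℝ)/pp) * m₂ := by
        rw [hρ_split]
        have h2a : (l₂^n)^((1:ℝ)/pp) ≤ m₂ := by
          rw [hm₂_def]
          apply Real.rpow_le_rpow_of_exponent_le hln₂1
          rw [one_div]
          exact inv_anti₀ hpinf0 hpiM
        have h2b : (0:ℝ) < (l₂^n)^((1:ℝ)/pp) := Real.rpow_pos_of_pos hln₂ _
        have h2c : m₁ ≤ (l₁^n)^((1:ℝ)/pp) := by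
          rw [hm₁_def]
          apply Real.rpow_le_rpow_of_exponent_ge hln₁ hln₁1
          rw [one_div]
          exact inv_anti₀ hq0 hqp
        calc m₁ ≤ (l₁^n)^((1:ℝ)/pp) := h2c
          _ = (l₁^n)^((1:ℝ)/pp) * 1 := (mul_one _).symm
          _ ≤ (l₁^n)^((1:ℝ)/pp) * (m₂ / (l₂^n)^((1:ℝ)/pp)) := by
              apply mul_le_mul_of_nonneg_left _ (Real.rpow_nonneg hln₁.le _)
              rw [le_div_iff₀ h2b, one_mul]
              exact h2a
          _ = (l₁^n)^((1:ℝ)/pp) / (l₂^n)^((1:ℝ)/pp) * m₂ := by ring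
      exact S16.combine hK1 hm₁0.le hm₂0.le (Real.rpow_nonneg hρ0.le _)
        (Real.rpow_nonneg hρ0.le _) hub1 hlb1 hub2 hlb2 key1 key2


end
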